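/- In the shifted Yangian Y_π(gl_n), the series a_i(u) and c_i(u) satisfy the relation (u-v)[a_i(u), c_i(v)] = c_i(u)a_i(v) - c_i(v)a_i(u), as an identity of formal series in u^{-1} and v^{-1}. -/

import Mathlib

open scoped Classical
open PowerSeries

noncomputable section

/-- The shifted Yangian `Y_π(gl_n)` presentation: a ring `A` together with elements
`d i r`, `d' i r`, `e i r`, `f i r` satisfying the Brundan–Kleshchev defining relations
for the pyramid `π = (p 1 ≤ ⋯ ≤ p n)`.  (`d i 0 = 1`, `e i r = 0` below the admissible
range, `f i 0 = 0`.) -/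
structure ShiftedYangian (A : Type) [Ring A] (n : ℕ) (p : ℕ → ℕ) where
  d : ℕ → ℕ → A
  d' : ℕ → ℕ → A
  e : ℕ → ℕ → A
  f : ℕ → ℕ → A
  d_zero : ∀ i, d i 0 = 1
  d'_zero : ∀ i, d' i 0 = 1
  e_zero : ∀ i r, r < p (i+1) - p i + 1 → e i r = 0
  f_zero : ∀ i, f i 0 = 0
  d_inv : ∀ i r, 1 ≤ i → i ≤ n →
    (∑ t ∈ Finset.range (r+1), d i t * d' i (r - t)) = if r = 0 then 1 else 0
  rel_dd : ∀ i j r s, ⁅d i r, d j s⁆ = 0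
  rel_ef : ∀ i j r s, 1 ≤ i → i ≤ n - 1 → 1 ≤ j → j ≤ n - 1 →
    p (i+1) - p i + 1 ≤ r → 1 ≤ s →
    ⁅e i r, f j s⁆ =
      if i = j then -(∑ t ∈ Finset.range (r+s), d' i t * d (i+1) (r+s-1-t)) else 0
  rel_de : ∀ i j r s, 1 ≤ i → i ≤ n → 1 ≤ j → j ≤ n - 1 → 1 ≤ r →
    p (j+1) - p j + 1 ≤ s →
    ⁅d i r, e j s⁆ =
      ((if i = j then (1:ℤ) else 0) - (if i = j + 1 then 1 else 0)) •
        ∑ t ∈ Finset.range r, d i t * e j (r+s-1-t)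
  rel_df : ∀ i j r s, 1 ≤ i → i ≤ n → 1 ≤ j → j ≤ n - 1 → 1 ≤ r → 1 ≤ s →
    ⁅d i r, f j s⁆ =
      ((if i = j + 1 then (1:ℤ) else 0) - (if i = j then 1 else 0)) •
        ∑ t ∈ Finset.range r, f j (r+s-1-t) * d i t
  rel_ee : ∀ i r s, 1 ≤ i → i ≤ n - 1 →
    p (i+1) - p i + 1 ≤ r → p (i+1) - p i + 1 ≤ s →
    ⁅e i r, e i (s+1)⁆ - ⁅e i (r+1), e i s⁆ = e i r * e i s + e i s * e i r
  rel_ff : ∀ i r s, 1 ≤ i → i ≤ n - 1 → 1 ≤ r → 1 ≤ s →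
    ⁅f i (r+1), f i s⁆ - ⁅f i r, f i (s+1)⁆ = f i r * f i s + f i s * f i r
  rel_ee1 : ∀ i r s, 1 ≤ i → i + 1 ≤ n - 1 →
    p (i+1) - p i + 1 ≤ r → p (i+2) - p (i+1) + 1 ≤ s →
    ⁅e i r, e (i+1) (s+1)⁆ - ⁅e i (r+1), e (i+1) s⁆ = -(e i r * e (i+1) s)
  rel_ff1 : ∀ i r s, 1 ≤ i → i + 1 ≤ n - 1 → 1 ≤ r → 1 ≤ s →
    ⁅f i (r+1), f (i+1) s⁆ - ⁅f i r, f (i+1) (s+1)⁆ = -(f (i+1) s * f i r)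
  rel_ee2 : ∀ i j r s, 1 ≤ i → i ≤ n - 1 → 1 ≤ j → j ≤ n - 1 →
    (i + 1 < j ∨ j + 1 < i) →
    p (i+1) - p i + 1 ≤ r → p (j+1) - p j + 1 ≤ s → ⁅e i r, e j s⁆ = 0
  rel_ff2 : ∀ i j r s, 1 ≤ i → i ≤ n - 1 → 1 ≤ j → j ≤ n - 1 →
    (i + 1 < j ∨ j + 1 < i) → 1 ≤ r → 1 ≤ s → ⁅f i r, f j s⁆ = 0
  serre_e : ∀ i j r s t, 1 ≤ i → i ≤ n - 1 → 1 ≤ j → j ≤ n - 1 →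
    (i = j + 1 ∨ j = i + 1) →
    p (i+1) - p i + 1 ≤ r → p (i+1) - p i + 1 ≤ s → p (j+1) - p j + 1 ≤ t →
    ⁅e i r, ⁅e i s, e j t⁆⁆ + ⁅e i s, ⁅e i r, e j t⁆⁆ = 0
  serre_f : ∀ i j r s t, 1 ≤ i → i ≤ n - 1 → 1 ≤ j → j ≤ n - 1 →
    (i = j + 1 ∨ j = i + 1) → 1 ≤ r → 1 ≤ s → 1 ≤ t →
    ⁅f i r, ⁅f i s, f j t⁆⁆ + ⁅f i s, ⁅f i r, f j t⁆⁆ = 0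

variable {A : Type} [Ring A]

/-- The re-expansion of `g(u - c)` as a formal series in `u⁻¹`, where `g` is regarded as a
series in `u⁻¹` (the coefficient of `u⁻ʲ` in `(u-c)⁻ʳ` is `C(j-1, r-1) cʲ⁻ʳ`). -/
def shiftSeries (c : ℤ) (g : PowerSeries A) : PowerSeries A :=
  PowerSeries.mk fun j => if j = 0 then PowerSeries.coeff 0 g else
    ∑ r ∈ Finset.Icc 1 j,
      ((j-1).choose (r-1) : A) * (c : A)^(j-r) * PowerSeries.coeff r g

/-- Coefficient function indexed by `ℤ` (zero in negative degrees). -/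
def zcoeff (j : ℤ) (g : PowerSeries A) : A :=
  if h : 0 ≤ j then PowerSeries.coeff j.toNat g else 0

namespace ShiftedYangian

variable {n : ℕ} {p : ℕ → ℕ} (Y : ShiftedYangian A n p)

/-- The series `d_i(u) = 1 + Σ_{r≥1} d_i^{(r)} u⁻ʳ` (as a series in `u⁻¹`). -/
def dS (i : ℕ) : PowerSeries A := PowerSeries.mk (Y.d i)

/-- The series `e_i(u)`. -/
def eS (i : ℕ) : PowerSeries A := PowerSeries.mk (Y.e i)

/-- The series `f_i(u)`. -/
def fS (i : ℕ) : PowerSeries A := PowerSeries.mk (Y.f i)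

/-- `a_i(u) = d_1(u) d_2(u-1) ⋯ d_i(u-i+1)`. -/
def aS (i : ℕ) : PowerSeries A :=
  ((List.range i).map fun k : ℕ => shiftSeries (k : ℤ) (Y.dS (k+1))).prod

/-- `b_i(u) = a_i(u) e_i(u-i+1)`. -/
def bS (i : ℕ) : PowerSeries A := Y.aS i * shiftSeries ((i : ℤ) - 1) (Y.eS i)

/-- `c_i(u) = f_i(u-i+1) a_i(u)`. -/
def cS (i : ℕ) : PowerSeries A := shiftSeries ((i : ℤ) - 1) (Y.fS i) * Y.aS i

end ShiftedYangian

/-- `p_1 + ⋯ + p_i`, the degree of the polynomial `A_i(u)`. -/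
def degP (p : ℕ → ℕ) (i : ℕ) : ℕ := ∑ k ∈ Finset.range i, p (k+1)

/-- The series `u^{-(p_1+⋯+p_i)} · u^{p_1}(u-1)^{p_2}⋯(u-i+1)^{p_i}`, i.e.
`∏_{k=0}^{i-1} (1 - k u⁻¹)^{p_{k+1}}` as a series in `u⁻¹`. -/
def polyPre (p : ℕ → ℕ) (i : ℕ) : PowerSeries A :=
  ((List.range i).map fun k : ℕ =>
    ((1 : PowerSeries A) - PowerSeries.C (k : A) * PowerSeries.X) ^ (p (k+1))).prod

/-- `∏_{k=0}^{i-1} (1 - (k+1) u⁻¹)^{p_{k+1}}`, the prefactor of `A_i(u-1)` divided by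
`u^{p_1+⋯+p_i}`. -/
def polyPreSh (p : ℕ → ℕ) (i : ℕ) : PowerSeries A :=
  ((List.range i).map fun k : ℕ =>
    ((1 : PowerSeries A) - PowerSeries.C ((k : A) + 1) * PowerSeries.X) ^ (p (k+1))).prod

/-- The prefactor of `B_i(u)` divided by `u^{p_1+⋯+p_{i-1}+p_{i+1}}`:
`∏_{k=0}^{i-2} (1 - k u⁻¹)^{p_{k+1}} · (1 - (i-1) u⁻¹)^{p_{i+1}}`. -/
def polyPreB (p : ℕ → ℕ) (i : ℕ) : PowerSeries A :=
  (((List.range (i-1)).map fun k : ℕ =>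
    ((1 : PowerSeries A) - PowerSeries.C (k : A) * PowerSeries.X) ^ (p (k+1))).prod) *
    ((1 : PowerSeries A) - PowerSeries.C ((i : A) - 1) * PowerSeries.X) ^ (p (i+1))

namespace ShiftedYangian

variable {n : ℕ} {p : ℕ → ℕ} (Y : ShiftedYangian A n p)

/-- `u^{-(p_1+⋯+p_i)} A_i(u)`. -/
def alS (i : ℕ) : PowerSeries A := polyPre p i * Y.aS i

/-- `u^{-(p_1+⋯+p_{i-1}+p_{i+1})} B_i(u)`. -/
def beS (i : ℕ) : PowerSeries A := polyPreB p i * Y.bS i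

/-- `u^{-(p_1+⋯+p_i)} C_i(u)`. -/
def gaS (i : ℕ) : PowerSeries A := polyPre p i * Y.cS i

end ShiftedYangian

/-! The relation comes from `(u - v) ⁅d_i(u), f_i(v)⁆ = (f_i(u) - f_i(v)) d_i(u)`, the generating
form of the defining relation between `d_i` and `f_i`. This relation survives the simultaneous
shift `u ↦ u - c`, `v ↦ v - c`, because `u - v` is shift invariant and `g(u) ↦ g(u - c)` is
multiplicative; and it survives left multiplication of the `d`-series by a series whose
coefficients commute with the `f`-series. As `a_i(u) = a_{i-1}(u) d_i(u - i + 1)` and `a_{i-1}`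
only involves `d_1, …, d_{i-1}`, it therefore holds for `a_i(u)` and `f_i(v - i + 1)`. Finally
the coefficients of `a_i` commute with each other, so right multiplication of `f_i(v - i + 1)`
by `a_i(v)` turns it into the relation between `a_i` and `c_i(v) = f_i(v - i + 1) a_i(v)`. -/

section

attribute [local instance] LieRing.ofAssociativeRing

open Finset.HasAntidiagonal (antidiagonal mem_antidiagonal)

theorem lie_mul_left_of_commute {x y z : A} (h : Commute x z) :
    ⁅x * y, z⁆ = x * ⁅y, z⁆ := by
  rw [Ring.lie_def, Ring.lie_def, mul_sub, mul_assoc, ← mul_assoc z, ← h.eq, mul_assoc]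

theorem lie_mul_right_of_commute {x y z : A} (h : Commute x z) :
    ⁅x, y * z⁆ = ⁅x, y⁆ * z := by
  rw [Ring.lie_def, Ring.lie_def, sub_mul, mul_assoc, mul_assoc, ← h.eq, ← mul_assoc,
    ← mul_assoc]

namespace PowerSeries

theorem commute_of_coeff_commute {g h : PowerSeries A}
    (hgh : ∀ a b, Commute (coeff a g) (coeff b h)) : Commute g h := by
  ext k
  rw [coeff_mul, coeff_mul, ← Finset.Nat.sum_antidiagonal_swap]
  exact Finset.sum_congr rfl fun q _ => (hgh q.2 q.1).eq

theorem coeff_mul_mem {R : Subring A} {g h : PowerSeries A} (hg : ∀ j, coeff j g ∈ R)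
    (hh : ∀ j, coeff j h ∈ R) (j : ℕ) : coeff j (g * h) ∈ R := by
  rw [coeff_mul]
  exact sum_mem fun q _ => mul_mem (hg q.1) (hh q.2)

end PowerSeries

/-- Coefficient form of `(u - v) ⁅X(u), Y(v)⁆ = (Y(u) - Y(v)) X(u)` for series `X`, `Y` in
`u⁻¹`, `v⁻¹`: the coefficient of `u⁻ʳ v⁻ˢ`. -/
def DFRelation (X Y : PowerSeries A) : Prop :=
  ∀ r s : ℕ, ⁅coeff (r + 1) X, coeff s Y⁆ - ⁅coeff r X, coeff (s + 1) Y⁆ =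
    (if s = 0 then coeff r (Y * X) else 0) - coeff s Y * coeff r X

/-- Coefficient form of `(u - v) ⁅X(u), Z(v)⁆ = Z(u) X(v) - Z(v) X(u)`. -/
def ACRelation (X Z : PowerSeries A) : Prop :=
  ∀ r s : ℕ, ⁅coeff (r + 1) X, coeff s Z⁆ - ⁅coeff r X, coeff (s + 1) Z⁆ =
    coeff r Z * coeff s X - coeff s Z * coeff r X

namespace DFRelation

variable {X Y : PowerSeries A}

theorem mul_left {G : PowerSeries A} (h : DFRelation X Y) (hX : constantCoeff X = 1)
    (hGY : ∀ a b, Commute (coeff a G) (coeff b Y)) : DFRelation (G * X) Y := by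
  intro r s
  have expand : ∀ x y, ⁅coeff x (G * X), coeff y Y⁆ =
      ∑ q ∈ antidiagonal x, coeff q.1 G * ⁅coeff q.2 X, coeff y Y⁆ := fun x y => by
    rw [coeff_mul, sum_lie]
    exact Finset.sum_congr rfl fun q _ => lie_mul_left_of_commute (hGY _ _)
  rw [expand, expand, Finset.Nat.sum_antidiagonal_succ', coeff_zero_eq_constantCoeff_apply, hX,
    (Commute.one_left _).lie_eq, mul_zero, zero_add, ← Finset.sum_sub_distrib]
  simp_rw [← mul_sub, h _ s, mul_sub, Finset.sum_sub_distrib, mul_ite, mul_zero,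
    Finset.sum_ite_irrel, Finset.sum_const_zero]
  congr 1
  · rw [← mul_assoc, ← (commute_of_coeff_commute hGY).eq, mul_assoc, coeff_mul r G]
  · rw [coeff_mul, Finset.mul_sum]
    exact Finset.sum_congr rfl fun q _ => by rw [← mul_assoc, ← mul_assoc, (hGY _ _).eq]

theorem acRelation_mul (h : DFRelation X Y) (hY : constantCoeff Y = 0)
    (hX : ∀ a b, Commute (coeff a X) (coeff b X)) : ACRelation X (Y * X) := by
  intro r s
  have expand : ∀ x y, ⁅coeff x X, coeff y (Y * X)⁆ =
      ∑ q ∈ antidiagonal y, ⁅coeff x X, coeff q.1 Y⁆ * coeff q.2 X := fun x y => by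
    rw [coeff_mul, lie_sum]
    exact Finset.sum_congr rfl fun q _ => lie_mul_right_of_commute (hX _ _)
  rw [expand, expand, Finset.Nat.sum_antidiagonal_succ, coeff_zero_eq_constantCoeff_apply, hY,
    (Commute.zero_right _).lie_eq, zero_mul, zero_add, ← Finset.sum_sub_distrib]
  simp_rw [← sub_mul, h r _, sub_mul, Finset.sum_sub_distrib, ite_mul, zero_mul]
  congr 1
  · refine (Finset.sum_eq_single_of_mem (0, s) (by simp) fun q hq hq0 => if_neg ?_).trans
      (if_pos rfl)
    rw [mem_antidiagonal] at hq
    exact fun h0 => hq0 (Prod.ext h0 (by omega))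
  · rw [coeff_mul, Finset.sum_mul]
    exact Finset.sum_congr rfl fun q _ => by rw [mul_assoc, mul_assoc, (hX _ _).eq]

end DFRelation

/-- `(u - c)⁻¹ = u⁻¹ (1 - c u⁻¹)⁻¹` as a series in `u⁻¹`: the coefficient of `u⁻ʲ` in its
`t`-th power is the weight of `coeff t g` in `coeff j (shiftSeries c g)`. -/
def shiftKernel (c : ℤ) : PowerSeries ℤ := X * mk fun n => c ^ n

theorem shiftKernel_pow (c : ℤ) (t : ℕ) :
    shiftKernel c ^ t = X ^ t * rescale c (mk 1 ^ t) := by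
  rw [shiftKernel, mul_pow, map_pow]
  congr
  ext n
  simp [coeff_rescale]

theorem coeff_shiftKernel_pow_of_lt {c : ℤ} {j t : ℕ} (h : j < t) :
    coeff j (shiftKernel c ^ t) = 0 := by
  rw [shiftKernel_pow, coeff_X_pow_mul', if_neg (by omega)]

theorem coeff_shiftKernel_pow {c : ℤ} {j t : ℕ} (h1 : 1 ≤ t) (h2 : t ≤ j) :
    coeff j (shiftKernel c ^ t) = (j - 1).choose (t - 1) * c ^ (j - t) := by
  obtain ⟨t, rfl⟩ : ∃ t', t = t' + 1 := ⟨t - 1, by omega⟩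
  rw [shiftKernel_pow, coeff_X_pow_mul', if_pos h2, coeff_rescale, mk_one_pow_eq_mk_choose_add,
    coeff_mk, show t + (j - (t + 1)) = j - 1 by omega, Nat.add_sub_cancel, mul_comm]

theorem coeff_succ_shiftKernel_pow_succ (c : ℤ) (j t : ℕ) :
    coeff (j + 1) (shiftKernel c ^ (t + 1)) =
      coeff j (shiftKernel c ^ t) + c * coeff j (shiftKernel c ^ (t + 1)) := by
  have hW : shiftKernel c = X * (1 + C c * shiftKernel c) := by
    rw [shiftKernel]
    congr 1
    ext (_ | n)
    · simp
    · rw [coeff_mk, map_add, coeff_C_mul, coeff_succ_X_mul, coeff_mk, coeff_one,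
        if_neg n.succ_ne_zero, zero_add, pow_succ, mul_comm]
  have hpow : shiftKernel c ^ (t + 1) =
      X * (shiftKernel c ^ t + C c * shiftKernel c ^ (t + 1)) :=
    calc shiftKernel c ^ (t + 1) = shiftKernel c ^ t * (X * (1 + C c * shiftKernel c)) := by
          rw [pow_succ, ← hW]
      _ = X * (shiftKernel c ^ t + C c * shiftKernel c ^ (t + 1)) := by ring
  conv_lhs => rw [hpow, coeff_succ_X_mul, map_add, coeff_C_mul]

theorem coeff_shiftSeries (c : ℤ) (g : PowerSeries A) {j N : ℕ} (hN : j < N) :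
    coeff j (shiftSeries c g) =
      ∑ t ∈ Finset.range N, coeff j (shiftKernel c ^ t) • coeff t g := by
  have hj : coeff j (shiftSeries c g) =
      ∑ t ∈ Finset.range (j + 1), coeff j (shiftKernel c ^ t) • coeff t g := by
    rw [shiftSeries, coeff_mk]
    rcases j with _ | j
    · simp
    · rw [if_neg j.succ_ne_zero, Finset.sum_range_succ', pow_zero, coeff_one,
        if_neg j.succ_ne_zero, zero_smul, add_zero, ← Finset.Ico_add_one_right_eq_Icc,
        Finset.sum_Ico_eq_sum_range]
      refine Finset.sum_congr (by simp) fun t ht => ?_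
      rw [Finset.mem_range] at ht
      rw [coeff_shiftKernel_pow (by omega) (by omega), zsmul_eq_mul, add_comm 1 t]
      push_cast
      rfl
  rw [hj]
  refine Finset.sum_subset (Finset.range_subset_range.2 hN) fun t _ ht => ?_
  rw [coeff_shiftKernel_pow_of_lt (by simpa using ht), zero_smul]

theorem constantCoeff_shiftSeries (c : ℤ) (g : PowerSeries A) :
    constantCoeff (shiftSeries c g) = constantCoeff g := by
  rw [shiftSeries, constantCoeff_mk, if_pos rfl, coeff_zero_eq_constantCoeff_apply]

theorem coeff_shiftSeries_mem {R : Subring A} (c : ℤ) {g : PowerSeries A}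
    (hg : ∀ j, coeff j g ∈ R) (j : ℕ) : coeff j (shiftSeries c g) ∈ R := by
  rw [coeff_shiftSeries c g (Nat.lt_add_one j)]
  exact sum_mem fun t _ => zsmul_mem (hg t) _

theorem coeff_succ_shiftSeries (c : ℤ) (g : PowerSeries A) (j : ℕ) :
    coeff (j + 1) (shiftSeries c g) =
      coeff j (shiftSeries c (mk fun t => coeff (t + 1) g)) +
        c • (coeff j (shiftSeries c g) - if j = 0 then constantCoeff g else 0) := by
  have hsucc : coeff (j + 1) (shiftSeries c g) =
      ∑ t ∈ Finset.range (j + 1), coeff (j + 1) (shiftKernel c ^ (t + 1)) • coeff (t + 1) g := by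
    rw [coeff_shiftSeries c g (N := j + 2) (by omega), Finset.sum_range_succ', pow_zero,
      coeff_one, if_neg j.succ_ne_zero, zero_smul, add_zero]
  have hself : coeff j (shiftSeries c g) =
      (∑ t ∈ Finset.range (j + 1), coeff j (shiftKernel c ^ (t + 1)) • coeff (t + 1) g) +
        if j = 0 then constantCoeff g else 0 := by
    rw [coeff_shiftSeries c g (N := j + 2) (by omega), Finset.sum_range_succ', pow_zero,
      coeff_one, ← coeff_zero_eq_constantCoeff_apply]
    split_ifs <;> simp
  rw [hsucc, hself, add_sub_cancel_right, coeff_shiftSeries c _ (Nat.lt_add_one j)]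
  simp only [coeff_succ_shiftKernel_pow_succ, add_smul, mul_smul, Finset.sum_add_distrib,
    coeff_mk, ← Finset.smul_sum]

theorem shiftSeries_mul (c : ℤ) (g h : PowerSeries A) :
    shiftSeries c (g * h) = shiftSeries c g * shiftSeries c h := by
  ext j
  set k : ℕ → ℕ → ℤ := fun j t => coeff j (shiftKernel c ^ t)
  set F : ℕ → ℕ → A := fun t u => k j (t + u) • (coeff t g * coeff u h)
  have hconv : ∀ t u, ∑ q ∈ antidiagonal j, k q.1 t * k q.2 u = k j (t + u) := fun t u => by
    simp only [k, pow_add, coeff_mul]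
  calc coeff j (shiftSeries c (g * h))
      = ∑ m ∈ Finset.range (j + 1), ∑ t ∈ Finset.range (m + 1), F t (m - t) := by
        rw [coeff_shiftSeries c _ (Nat.lt_add_one j)]
        refine Finset.sum_congr rfl fun m _ => ?_
        rw [coeff_mul, Finset.Nat.sum_antidiagonal_eq_sum_range_succ_mk, Finset.smul_sum]
        refine Finset.sum_congr rfl fun t ht => ?_
        rw [Finset.mem_range] at ht
        simp only [F, k, Nat.add_sub_cancel' (Nat.lt_succ_iff.1 ht)]
    _ = ∑ t ∈ Finset.range (j + 1), ∑ u ∈ Finset.range (j + 1 - t), F t u :=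
        Finset.sum_range_diag_flip _ _
    _ = ∑ t ∈ Finset.range (j + 1), ∑ u ∈ Finset.range (j + 1), F t u := by
        refine Finset.sum_congr rfl fun t _ => Finset.sum_subset
          (Finset.range_subset_range.2 (Nat.sub_le _ _)) fun u _ hu => ?_
        simp only [Finset.mem_range] at hu
        simp only [F, k, coeff_shiftKernel_pow_of_lt (by omega : j < t + u), zero_smul]
    _ = ∑ q ∈ antidiagonal j, (∑ t ∈ Finset.range (j + 1), k q.1 t • coeff t g) *
          ∑ u ∈ Finset.range (j + 1), k q.2 u • coeff u h := by
        simp only [Finset.sum_mul_sum, smul_mul_smul_comm, F, ← hconv, Finset.sum_smul]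
        symm
        rw [Finset.sum_comm]
        exact Finset.sum_congr rfl fun t _ => Finset.sum_comm
    _ = coeff j (shiftSeries c g * shiftSeries c h) := by
        rw [coeff_mul]
        refine Finset.sum_congr rfl fun q hq => ?_
        rw [mem_antidiagonal] at hq
        rw [coeff_shiftSeries c g (N := j + 1) (by omega),
          coeff_shiftSeries c h (N := j + 1) (by omega)]

theorem DFRelation.shift {X Y : PowerSeries A} (h : DFRelation X Y)
    (hX : constantCoeff X = 1) (hY : constantCoeff Y = 0) (c : ℤ) :
    DFRelation (shiftSeries c X) (shiftSeries c Y) := by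
  intro r s
  unfold DFRelation at h
  set k : ℕ → ℕ → ℤ := fun j t => coeff j (shiftKernel c ^ t)
  set X' := mk fun a => coeff (a + 1) X
  set Y' := mk fun b => coeff (b + 1) Y
  have hcancel : ⁅coeff (r + 1) (shiftSeries c X), coeff s (shiftSeries c Y)⁆ -
        ⁅coeff r (shiftSeries c X), coeff (s + 1) (shiftSeries c Y)⁆ =
      ⁅coeff r (shiftSeries c X'), coeff s (shiftSeries c Y)⁆ -
        ⁅coeff r (shiftSeries c X), coeff s (shiftSeries c Y')⁆ := by
    have hone : ⁅(if r = 0 then 1 else 0 : A), coeff s (shiftSeries c Y)⁆ = 0 := by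
      split_ifs <;> simp [Ring.lie_def]
    rw [coeff_succ_shiftSeries c X, coeff_succ_shiftSeries c Y, hX, hY, ite_self, sub_zero]
    simp only [add_lie, lie_add, sub_lie, smul_lie, lie_smul, hone, sub_zero]
    abel
  have hbilin : ∀ f g : ℕ → A,
      ⁅∑ a ∈ Finset.range (r + 1), k r a • f a, ∑ b ∈ Finset.range (s + 1), k s b • g b⁆ =
        ∑ a ∈ Finset.range (r + 1), ∑ b ∈ Finset.range (s + 1), (k r a * k s b) • ⁅f a, g b⁆ := by
    intro f g
    rw [sum_lie]
    refine Finset.sum_congr rfl fun a _ => ?_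
    rw [smul_lie, lie_sum, Finset.smul_sum]
    exact Finset.sum_congr rfl fun b _ => by rw [lie_smul, smul_smul]
  have hexpand : ⁅coeff r (shiftSeries c X'), coeff s (shiftSeries c Y)⁆ -
        ⁅coeff r (shiftSeries c X), coeff s (shiftSeries c Y')⁆ =
      ∑ a ∈ Finset.range (r + 1), ∑ b ∈ Finset.range (s + 1), (k r a * k s b) •
        (⁅coeff (a + 1) X, coeff b Y⁆ - ⁅coeff a X, coeff (b + 1) Y⁆) := by
    rw [coeff_shiftSeries c X' (Nat.lt_add_one r), coeff_shiftSeries c Y (Nat.lt_add_one s),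
      coeff_shiftSeries c X (Nat.lt_add_one r), coeff_shiftSeries c Y' (Nat.lt_add_one s),
      hbilin, hbilin, ← Finset.sum_sub_distrib]
    simp only [X', Y', coeff_mk, ← Finset.sum_sub_distrib, smul_sub]
  rw [hcancel, hexpand, ← shiftSeries_mul, coeff_shiftSeries c (Y * X) (Nat.lt_add_one r),
    coeff_shiftSeries c Y (Nat.lt_add_one s), coeff_shiftSeries c X (Nat.lt_add_one r)]
  simp only [h, smul_sub, Finset.sum_sub_distrib, Finset.sum_mul_sum, smul_mul_smul_comm]
  congr 1
  · simp only [smul_ite, smul_zero, Finset.sum_ite_eq', Finset.mem_range, Nat.succ_pos,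
      if_true, k, pow_zero, coeff_one]
    split_ifs <;> simp
  · rw [Finset.sum_comm]
    exact Finset.sum_congr rfl fun b _ => Finset.sum_congr rfl fun a _ => by rw [mul_comm]

theorem ACRelation.lie_zcoeff {X Z : PowerSeries A} (h : ACRelation X Z)
    (hX : constantCoeff X = 1) (hZ : constantCoeff Z = 0) (r s : ℤ) :
    ⁅zcoeff (r + 1) X, zcoeff s Z⁆ - ⁅zcoeff r X, zcoeff (s + 1) Z⁆ =
      zcoeff r Z * zcoeff s X - zcoeff s Z * zcoeff r X := by
  have hneg : ∀ {j : ℤ} (g : PowerSeries A), j < 0 → zcoeff j g = 0 :=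
    fun g hj => dif_neg (by omega)
  have hnat : ∀ (j : ℕ) (g : PowerSeries A), zcoeff j g = coeff j g :=
    fun j g => by rw [zcoeff, dif_pos (Int.natCast_nonneg j), Int.toNat_natCast]
  have hsucc : ∀ {j : ℤ} (g : PowerSeries A), j < 0 →
      zcoeff (j + 1) g = if j = -1 then constantCoeff g else 0 := fun g hj => by
    split_ifs with hj1
    · rw [hj1, neg_add_cancel, ← Nat.cast_zero, hnat, coeff_zero_eq_constantCoeff_apply]
    · exact hneg g (by omega)
  rcases lt_or_ge r 0 with hr | hr
  · rw [hneg X hr, hneg Z hr, hsucc X hr, hX]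
    split_ifs <;> simp [Ring.lie_def]
  rcases lt_or_ge s 0 with hs | hs
  · rw [hneg X hs, hneg Z hs, hsucc Z hs, hZ, ite_self]
    simp [Ring.lie_def]
  lift r to ℕ using hr
  lift s to ℕ using hs
  exact_mod_cast h r s

namespace ShiftedYangian

variable {n : ℕ} {p : ℕ → ℕ} (Y : ShiftedYangian A n p)

theorem coeff_dS (i r : ℕ) : coeff r (Y.dS i) = Y.d i r := coeff_mk _ _

theorem coeff_fS (i r : ℕ) : coeff r (Y.fS i) = Y.f i r := coeff_mk _ _

theorem constantCoeff_dS (i : ℕ) : constantCoeff (Y.dS i) = 1 := by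
  rw [dS, constantCoeff_mk, Y.d_zero]

theorem constantCoeff_fS (i : ℕ) : constantCoeff (Y.fS i) = 0 := by
  rw [fS, constantCoeff_mk, Y.f_zero]

theorem aS_zero : Y.aS 0 = 1 := rfl

theorem aS_succ (i : ℕ) : Y.aS (i + 1) = Y.aS i * shiftSeries i (Y.dS (i + 1)) := by
  rw [aS, aS, List.range_succ, List.map_append, List.prod_append, List.map_singleton,
    List.prod_singleton]

theorem cS_succ (i : ℕ) : Y.cS (i + 1) = shiftSeries i (Y.fS (i + 1)) * Y.aS (i + 1) := by
  rw [cS, Nat.cast_succ, add_sub_cancel_right]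

theorem constantCoeff_aS (i : ℕ) : constantCoeff (Y.aS i) = 1 := by
  induction i with
  | zero => rw [aS_zero, map_one]
  | succ i ih => rw [aS_succ, map_mul, ih, constantCoeff_shiftSeries, constantCoeff_dS, one_mul]

theorem constantCoeff_cS (i : ℕ) : constantCoeff (Y.cS i) = 0 := by
  rw [cS, map_mul, constantCoeff_shiftSeries, constantCoeff_fS, zero_mul]

theorem coeff_aS_mem {R : Subring A} {i : ℕ} (hR : ∀ k r, 1 ≤ k → k ≤ i → Y.d k r ∈ R)
    (j : ℕ) : coeff j (Y.aS i) ∈ R := by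
  induction i generalizing j with
  | zero =>
    rw [aS_zero, coeff_one]
    split_ifs
    exacts [R.one_mem, R.zero_mem]
  | succ i ih =>
    rw [aS_succ]
    refine coeff_mul_mem (ih fun k r hk hki => hR k r hk (by omega))
      (coeff_shiftSeries_mem _ (fun r => ?_)) j
    rw [coeff_dS]
    exact hR _ _ (by omega) le_rfl

theorem commute_d_d (i j r s : ℕ) : Commute (Y.d i r) (Y.d j s) :=
  commute_iff_lie_eq.2 (Y.rel_dd i j r s)

theorem commute_coeff_aS (i j a b : ℕ) : Commute (coeff a (Y.aS i)) (coeff b (Y.aS j)) := by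
  set D := Set.range fun q : ℕ × ℕ => Y.d q.1 q.2
  have hD : ∀ j b, coeff b (Y.aS j) ∈ Subring.centralizer D := fun j =>
    Y.coeff_aS_mem fun k r _ _ => Subring.mem_centralizer_iff.2 <| by
      rintro _ ⟨⟨k', r'⟩, rfl⟩
      exact Y.commute_d_d k' k r' r
  have hb : coeff a (Y.aS i) ∈ Subring.centralizer {coeff b (Y.aS j)} :=
    Y.coeff_aS_mem (fun k r _ _ => Subring.mem_centralizer_iff.2 <| by
      rintro _ rfl
      exact (Subring.mem_centralizer_iff.1 (hD j b) _ ⟨(k, r), rfl⟩).symm) a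
  exact (Subring.mem_centralizer_iff.1 hb _ rfl).symm

theorem commute_d_f {i k : ℕ} (hi : i + 1 ≤ n - 1) (hk1 : 1 ≤ k) (hki : k ≤ i) (r s : ℕ) :
    Commute (Y.d k r) (Y.f (i + 1) s) := by
  rcases Nat.eq_zero_or_pos r with rfl | hr
  · rw [Y.d_zero]
    exact Commute.one_left _
  rcases Nat.eq_zero_or_pos s with rfl | hs
  · rw [Y.f_zero]
    exact Commute.zero_right _
  refine commute_iff_lie_eq.2 ?_
  rw [Y.rel_df k (i + 1) r s hk1 (by omega) (by omega) hi hr hs, if_neg (by omega),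
    if_neg (by omega), sub_zero, zero_smul]

theorem commute_coeff_aS_shiftSeries_fS {i : ℕ} (hi : i + 1 ≤ n - 1) (c : ℤ) (a b : ℕ) :
    Commute (coeff a (Y.aS i)) (coeff b (shiftSeries c (Y.fS (i + 1)))) := by
  have ha : coeff a (Y.aS i) ∈ Subring.centralizer (Set.range (Y.f (i + 1))) :=
    Y.coeff_aS_mem (fun k r hk hki => Subring.mem_centralizer_iff.2 <| by
      rintro _ ⟨s, rfl⟩
      exact (Y.commute_d_f hi hk hki r s).symm) a
  have hb : coeff b (shiftSeries c (Y.fS (i + 1))) ∈ Subring.centralizer {coeff a (Y.aS i)} :=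
    coeff_shiftSeries_mem c (fun s => Subring.mem_centralizer_iff.2 <| by
      rintro _ rfl
      rw [coeff_fS]
      exact (Subring.mem_centralizer_iff.1 ha _ ⟨s, rfl⟩).symm) b
  exact Subring.mem_centralizer_iff.1 hb _ rfl

theorem lie_d_f_succ {i : ℕ} (hi1 : 1 ≤ i) (hi : i ≤ n - 1) (r s : ℕ) :
    ⁅Y.d i r, Y.f i (s + 1)⁆ = -∑ t ∈ Finset.range r, Y.f i (r + s - t) * Y.d i t := by
  rcases Nat.eq_zero_or_pos r with rfl | hr
  · rw [Y.d_zero, (Commute.one_left _).lie_eq, Finset.sum_range_zero, neg_zero]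
  rw [Y.rel_df i i r (s + 1) hi1 (by omega) hi1 hi hr (by omega), if_neg (by omega), if_pos rfl,
    zero_sub, neg_smul, one_smul]
  rfl

theorem dfRelation_dS_fS {i : ℕ} (hi1 : 1 ≤ i) (hi : i ≤ n - 1) :
    DFRelation (Y.dS i) (Y.fS i) := by
  intro r s
  simp only [coeff_dS, coeff_fS]
  rcases s with _ | s
  · rw [Y.f_zero, (Commute.zero_right _).lie_eq, Y.lie_d_f_succ hi1 hi, if_pos rfl, zero_mul,
      sub_zero, zero_sub, neg_neg, coeff_mul, ← Finset.Nat.sum_antidiagonal_swap,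
      Finset.Nat.sum_antidiagonal_eq_sum_range_succ_mk, Finset.sum_range_succ]
    simp [coeff_dS, coeff_fS, Y.f_zero]
  · rw [Y.lie_d_f_succ hi1 hi, Y.lie_d_f_succ hi1 hi, if_neg s.succ_ne_zero,
      Finset.sum_range_succ, show r + 1 + s - r = s + 1 by omega]
    have : ∀ t ∈ Finset.range r, Y.f i (r + 1 + s - t) = Y.f i (r + (s + 1) - t) :=
      fun t _ => by congr 1; omega
    rw [Finset.sum_congr rfl fun t ht => by rw [this t ht]]
    abel

theorem acRelation_aS_cS {i : ℕ} (hi1 : 1 ≤ i) (hi : i ≤ n - 1) :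
    ACRelation (Y.aS i) (Y.cS i) := by
  obtain ⟨m, rfl⟩ : ∃ m, i = m + 1 := ⟨i - 1, by omega⟩
  have hdf : DFRelation (shiftSeries m (Y.dS (m + 1))) (shiftSeries m (Y.fS (m + 1))) :=
    (Y.dfRelation_dS_fS hi1 hi).shift (Y.constantCoeff_dS _) (Y.constantCoeff_fS _) m
  have haf : DFRelation (Y.aS (m + 1)) (shiftSeries m (Y.fS (m + 1))) := by
    rw [aS_succ]
    exact hdf.mul_left (by rw [constantCoeff_shiftSeries, constantCoeff_dS])
      (Y.commute_coeff_aS_shiftSeries_fS hi m)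
  rw [cS_succ]
  exact haf.acRelation_mul (by rw [constantCoeff_shiftSeries, constantCoeff_fS])
    (Y.commute_coeff_aS _ _)

end ShiftedYangian

end

open ShiftedYangian in
theorem aS_cS_relation_general
    {A : Type} [Ring A] {n : ℕ} {p : ℕ → ℕ}
    (Y : ShiftedYangian A n p) :
    ∀ i : ℕ, 1 ≤ i → i ≤ n - 1 →
      ∀ r s : ℤ,
        ⁅zcoeff (r+1) (Y.aS i), zcoeff s (Y.cS i)⁆ -
          ⁅zcoeff r (Y.aS i), zcoeff (s+1) (Y.cS i)⁆ =
        zcoeff r (Y.cS i) * zcoeff s (Y.aS i) -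
          zcoeff s (Y.cS i) * zcoeff r (Y.aS i) :=
  fun i hi1 hi =>
    (Y.acRelation_aS_cS hi1 hi).lie_zcoeff (Y.constantCoeff_aS i) (Y.constantCoeff_cS i)

open ShiftedYangian in
/-- In the shifted Yangian `Y_π(gl_n)`:
`(u-v)[a_i(u), c_i(v)] = c_i(u) a_i(v) - c_i(v) a_i(u)`, interpreted coefficientwise
(the coefficient of `u⁻ʳ v⁻ˢ` for every pair of integers `r`, `s`). -/
theorem aS_cS_relation
    {A : Type} [Ring A] {n : ℕ} {p : ℕ → ℕ}
    (hp : ∀ k, p k ≤ p (k+1)) (Y : ShiftedYangian A n p) :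
    ∀ i : ℕ, 1 ≤ i → i ≤ n - 1 →
      ∀ r s : ℤ,
        ⁅zcoeff (r+1) (Y.aS i), zcoeff s (Y.cS i)⁆ -
          ⁅zcoeff r (Y.aS i), zcoeff (s+1) (Y.cS i)⁆ =
        zcoeff r (Y.cS i) * zcoeff s (Y.aS i) -
          zcoeff s (Y.cS i) * zcoeff r (Y.aS i) :=
  aS_cS_relation_general Y
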